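/- arXiv:0801.1050 — 6 statements merged into one kernel-verified Lean document; each statement's English description precedes it below -/
import Mathlib

section
/- Let X be a real-valued random variable and C ≥ 0, λ ∈ [−1,1]. If E[cosh X] ≤ cosh C, then E[cosh(λX)] ≤ cosh(λC). -/
/-!
The function `φ s = cosh (λ * arcosh s)` is concave on `[1, ∞)`: its derivative at `s = cosh y` is
`λ sinh (λy) / sinh y`, which decreases in `y > 0` because
`(λ sinh (λt) cosh t - λ² cosh (λt) sinh t)' = (1 - λ²) λ sinh (λt) sinh t ≥ 0`.
Integrating the tangent-line inequality of `φ` at `cosh C` against the law of `X` (Jensen) gives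
the claim; for `C = 0` the slope degenerates and `cosh (λx) ≤ cosh x` suffices.
-/

open MeasureTheory Real Set
open scoped ENNReal

theorem mul_sinh_mul_nonneg (l : ℝ) {t : ℝ} (ht : 0 ≤ t) : 0 ≤ l * sinh (l * t) := by
  rcases le_total 0 l with hl | hl
  · exact mul_nonneg hl (sinh_nonneg_iff.2 (mul_nonneg hl ht))
  · exact mul_nonneg_of_nonpos_of_nonpos hl
      (sinh_nonpos_iff.2 (mul_nonpos_of_nonpos_of_nonneg hl ht))

theorem mul_sinh_mul_div_sinh_nonneg (l y : ℝ) : 0 ≤ l * sinh (l * y) / sinh y := by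
  rcases le_total 0 y with hy | hy
  · exact div_nonneg (mul_sinh_mul_nonneg l hy) (sinh_nonneg_iff.2 hy)
  · have := mul_sinh_mul_nonneg l (neg_nonneg.2 hy)
    rw [mul_neg, sinh_neg, mul_neg] at this
    exact div_nonneg_of_nonpos (neg_nonneg.1 this) (sinh_nonpos_iff.2 hy)

theorem cosh_mul_le_cosh {l : ℝ} (hl : |l| ≤ 1) (x : ℝ) : cosh (l * x) ≤ cosh x := by
  rw [cosh_le_cosh, abs_mul]
  exact mul_le_of_le_one_left (abs_nonneg x) hl

theorem hasDerivAt_sinh_mul (l t : ℝ) :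
    HasDerivAt (fun s => sinh (l * s)) (l * cosh (l * t)) t := by
  simpa [mul_comm] using (hasDerivAt_const_mul l).sinh (x := t)

theorem hasDerivAt_cosh_mul (l t : ℝ) :
    HasDerivAt (fun s => cosh (l * s)) (l * sinh (l * t)) t := by
  simpa [mul_comm] using (hasDerivAt_const_mul l).cosh (x := t)

theorem sq_mul_cosh_mul_mul_sinh_le {l : ℝ} (hl : |l| ≤ 1) {t : ℝ} (ht : 0 ≤ t) :
    l ^ 2 * cosh (l * t) * sinh t ≤ l * sinh (l * t) * cosh t := by
  let g t := l * sinh (l * t) * cosh t - l ^ 2 * cosh (l * t) * sinh t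
  have hg : ∀ t, HasDerivAt g ((1 - l ^ 2) * (l * sinh (l * t)) * sinh t) t := fun t =>
    ((((hasDerivAt_sinh_mul l t).const_mul l).mul (hasDerivAt_cosh t)).sub
      (((hasDerivAt_cosh_mul l t).const_mul (l ^ 2)).mul (hasDerivAt_sinh t))).congr_deriv
      (by ring)
  have hmono : MonotoneOn g (Ici 0) :=
    monotoneOn_of_hasDerivWithinAt_nonneg (convex_Ici 0)
      (fun t _ => (hg t).continuousAt.continuousWithinAt) (fun t _ => (hg t).hasDerivWithinAt)
      fun t ht => by
        rw [interior_Ici] at ht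
        exact mul_nonneg (mul_nonneg (sub_nonneg.2 ((sq_le_one_iff_abs_le_one l).2 hl))
          (mul_sinh_mul_nonneg l (le_of_lt ht))) (sinh_nonneg_iff.2 (le_of_lt ht))
  simpa [g] using hmono self_mem_Ici ht ht

theorem antitoneOn_mul_sinh_mul_div_sinh {l : ℝ} (hl : |l| ≤ 1) :
    AntitoneOn (fun t => l * sinh (l * t) / sinh t) (Ioi 0) := by
  have hr : ∀ t ∈ Ioi (0 : ℝ), HasDerivAt (fun t => l * sinh (l * t) / sinh t)
      ((l ^ 2 * cosh (l * t) * sinh t - l * sinh (l * t) * cosh t) / sinh t ^ 2) t :=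
    fun t ht => (((hasDerivAt_sinh_mul l t).const_mul l).div (hasDerivAt_sinh t)
      (sinh_pos_iff.2 ht).ne').congr_deriv (by ring)
  refine antitoneOn_of_hasDerivWithinAt_nonpos (convex_Ioi 0)
    (fun t ht => (hr t ht).continuousAt.continuousWithinAt)
    (fun t ht => (hr t (interior_subset ht)).hasDerivWithinAt) fun t ht => ?_
  rw [interior_Ioi] at ht
  exact div_nonpos_of_nonpos_of_nonneg
    (sub_nonpos.2 (sq_mul_cosh_mul_mul_sinh_le hl (le_of_lt ht))) (sq_nonneg _)

theorem cosh_mul_sub_cosh_mul_le {l : ℝ} (hl : |l| ≤ 1) (x : ℝ) {y : ℝ} (hy : y ≠ 0) :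
    cosh (l * x) - cosh (l * y) ≤ l * sinh (l * y) / sinh y * (cosh x - cosh y) := by
  wlog hy₀ : 0 < y generalizing y
  · have hy_neg : 0 < -y := neg_pos.2 (lt_of_le_of_ne (not_lt.1 hy₀) hy)
    simpa [neg_div_neg_eq] using this (neg_ne_zero.2 hy) hy_neg
  wlog hx : 0 ≤ x generalizing x
  · simpa using this (-x) (by linarith)
  set a := l * sinh (l * y) / sinh y
  let F t := a * (cosh t - cosh y) - (cosh (l * t) - cosh (l * y))
  have hF : ∀ t, HasDerivAt F (a * sinh t - l * sinh (l * t)) t := fun t =>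
    ((((hasDerivAt_cosh t).sub_const (cosh y)).const_mul a).sub
      ((hasDerivAt_cosh_mul l t).sub_const (cosh (l * y)))).congr_deriv (by ring)
  have hF' : ∀ t, 0 < t →
      a * sinh t - l * sinh (l * t) = (a - l * sinh (l * t) / sinh t) * sinh t := fun t ht => by
    field_simp [(sinh_pos_iff.2 ht).ne']
  -- `a` is the antitone ratio at `y`, so `F'` changes sign from `-` to `+` at `y`, where `F = 0`.
  suffices F y ≤ F x by simpa [F] using this
  rcases le_total x y with hxy | hyx
  · refine antitoneOn_of_hasDerivWithinAt_nonpos (convex_Icc 0 y)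
      (fun t _ => (hF t).continuousAt.continuousWithinAt) (fun t _ => (hF t).hasDerivWithinAt)
      (fun t ht => ?_) ⟨hx, hxy⟩ ⟨hy₀.le, le_rfl⟩ hxy
    rw [interior_Icc] at ht
    rw [hF' t ht.1]
    exact mul_nonpos_of_nonpos_of_nonneg
      (sub_nonpos.2 (antitoneOn_mul_sinh_mul_div_sinh hl ht.1 hy₀ ht.2.le))
      (sinh_nonneg_iff.2 ht.1.le)
  · refine monotoneOn_of_hasDerivWithinAt_nonneg (convex_Ici y)
      (fun t _ => (hF t).continuousAt.continuousWithinAt) (fun t _ => (hF t).hasDerivWithinAt)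
      (fun t ht => ?_) self_mem_Ici hyx hyx
    rw [interior_Ici] at ht
    have ht₀ : 0 < t := hy₀.trans ht
    rw [hF' t ht₀]
    exact mul_nonneg (sub_nonneg.2 (antitoneOn_mul_sinh_mul_div_sinh hl hy₀ ht₀ ht.le))
      (sinh_nonneg_iff.2 ht₀.le)

theorem lintegral_le_of_le_add_mul {Ω : Type*} [MeasurableSpace Ω] {μ : Measure Ω}
    [IsProbabilityMeasure μ] {f g : Ω → ℝ≥0∞} {a b c : ℝ≥0∞} (ha : a ≠ ∞) (hc : c ≠ ∞)
    (hfg : ∀ ω, f ω + a * c ≤ b + a * g ω) (hg : ∫⁻ ω, g ω ∂μ ≤ c) :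
    ∫⁻ ω, f ω ∂μ ≤ b := by
  refine ENNReal.le_of_add_le_add_right (ENNReal.mul_ne_top ha hc) ?_
  calc ∫⁻ ω, f ω ∂μ + a * c = ∫⁻ ω, (f ω + a * c) ∂μ := by
        rw [lintegral_add_right _ measurable_const, lintegral_const, measure_univ, mul_one]
    _ ≤ ∫⁻ ω, (b + a * g ω) ∂μ := lintegral_mono hfg
    _ = b + a * ∫⁻ ω, g ω ∂μ := by
        rw [lintegral_add_left measurable_const, lintegral_const, measure_univ, mul_one,
          lintegral_const_mul' _ _ ha]
    _ ≤ b + a * c := by gcongr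

theorem stmt3_general {Ω : Type*} [MeasurableSpace Ω] (μ : Measure Ω) [IsProbabilityMeasure μ]
    (X : Ω → ℝ) (C : ℝ) (l : ℝ) (hl : l ∈ Set.Icc (-1 : ℝ) 1)
    (h : ∫⁻ ω, ENNReal.ofReal (Real.cosh (X ω)) ∂μ ≤ ENNReal.ofReal (Real.cosh C)) :
    ∫⁻ ω, ENNReal.ofReal (Real.cosh (l * X ω)) ∂μ ≤ ENNReal.ofReal (Real.cosh (l * C)) := by
  replace hl : |l| ≤ 1 := abs_le.2 hl
  rcases eq_or_ne C 0 with rfl | hC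
  · rw [mul_zero]
    exact (lintegral_mono fun ω => ENNReal.ofReal_le_ofReal (cosh_mul_le_cosh hl _)).trans h
  set a := l * sinh (l * C) / sinh C
  have ha : 0 ≤ a := mul_sinh_mul_div_sinh_nonneg l C
  refine lintegral_le_of_le_add_mul (a := ENNReal.ofReal a) ENNReal.ofReal_ne_top
    ENNReal.ofReal_ne_top (fun ω => ?_) h
  have htangent := cosh_mul_sub_cosh_mul_le hl (X ω) hC
  rw [← ENNReal.ofReal_mul ha, ← ENNReal.ofReal_mul ha,
    ← ENNReal.ofReal_add (cosh_pos _).le (mul_nonneg ha (cosh_pos _).le),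
    ← ENNReal.ofReal_add (cosh_pos _).le (mul_nonneg ha (cosh_pos _).le)]
  exact ENNReal.ofReal_le_ofReal (by linarith [mul_sub a (cosh (X ω)) (cosh C)])

/-- If `E[cosh X] ≤ cosh C` then `E[cosh (λX)] ≤ cosh (λC)` for `C ≥ 0`, `λ ∈ [−1,1]`.
Since `cosh ≥ 0`, the expectations are taken as lower integrals in `ℝ≥0∞`. -/
theorem stmt3 {Ω : Type*} [MeasurableSpace Ω] (μ : Measure Ω) [IsProbabilityMeasure μ]
    (X : Ω → ℝ) (hX : Measurable X) (C : ℝ) (hC : 0 ≤ C) (l : ℝ) (hl : l ∈ Set.Icc (-1 : ℝ) 1)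
    (h : ∫⁻ ω, ENNReal.ofReal (Real.cosh (X ω)) ∂μ ≤ ENNReal.ofReal (Real.cosh C)) :
    ∫⁻ ω, ENNReal.ofReal (Real.cosh (l * X ω)) ∂μ ≤ ENNReal.ofReal (Real.cosh (l * C)) :=
  stmt3_general μ X C l hl h
end

section
/- There exists an absolute constant A ∈ (0,∞) such that for every real random variable X with E[X] = 0 and every C ≥ 0 with E[exp|X|] ≤ cosh C, one has E[exp(λX)] ≤ exp(A C² λ²) for all λ ∈ [−1,1]. In fact one can take A = sup_{x>0} ln(2 cosh x − 1)/x². -/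
/-!
With `s = |l|`, the bound `e^y ≤ y + 2 cosh y - 1` and `E X = 0` give
`E e^{lX} ≤ 2 E cosh (s X) - 1`. For `0 ≤ s ≤ 1` the function `t ↦ cosh (s arcosh t)` is concave
on `[1, ∞)` (this comes down to `u ↦ sinh (s u) / sinh u` being decreasing), so its tangent line
at `cosh C` together with `E cosh X ≤ E e^{|X|} ≤ cosh C` yields `E cosh (s X) ≤ cosh (s C)`.
Finally `2 cosh y - 1 ≤ 2 e^{y²/2} - 1 ≤ e^{y²}`, so `A = 1` works.
-/

open MeasureTheory ProbabilityTheory Real Set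

namespace Real

theorem mul_cosh_mul_mul_sinh_le {s u : ℝ} (hs0 : 0 ≤ s) (hs1 : s ≤ 1) (hu : 0 ≤ u) :
    s * cosh (s * u) * sinh u ≤ sinh (s * u) * cosh u := by
  let F : ℝ → ℝ := fun x => sinh (s * x) * cosh x - s * cosh (s * x) * sinh x
  have hF : ∀ x, HasDerivAt F ((1 - s ^ 2) * (sinh (s * x) * sinh x)) x := fun x => by
    have hsx := (hasDerivAt_id x).const_mul s
    simp only [id, mul_one] at hsx
    exact ((hsx.sinh.mul (hasDerivAt_cosh x)).sub
      ((hsx.cosh.const_mul s).mul (hasDerivAt_sinh x))).congr_deriv (by ring)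
  have hmono : MonotoneOn F (Ici 0) :=
    monotoneOn_of_hasDerivWithinAt_nonneg (convex_Ici 0)
      (fun x _ => (hF x).continuousAt.continuousWithinAt)
      (fun x _ => (hF x).hasDerivWithinAt)
      (fun x hx => by
        rw [interior_Ici] at hx
        have hx : 0 < x := hx
        have : 0 ≤ sinh (s * x) := sinh_nonneg_iff.2 (by positivity)
        have : 0 ≤ sinh x := sinh_nonneg_iff.2 hx.le
        have : 0 ≤ 1 - s ^ 2 := by nlinarith
        positivity)
  have := hmono self_mem_Ici hu hu
  simp only [F, mul_zero, sinh_zero, cosh_zero, mul_one, sub_zero] at this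
  linarith

theorem antitoneOn_sinh_mul_div_sinh {s : ℝ} (hs0 : 0 ≤ s) (hs1 : s ≤ 1) :
    AntitoneOn (fun u => sinh (s * u) / sinh u) (Ioi 0) := by
  have hderiv : ∀ u, 0 < u → HasDerivAt (fun u => sinh (s * u) / sinh u)
      ((s * cosh (s * u) * sinh u - sinh (s * u) * cosh u) / sinh u ^ 2) u := fun u hu => by
    have hsu := (hasDerivAt_id u).const_mul s
    simp only [id, mul_one] at hsu
    exact (hsu.sinh.div (hasDerivAt_sinh u) (sinh_pos_iff.2 hu).ne').congr_deriv (by ring)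
  refine antitoneOn_of_hasDerivWithinAt_nonpos (convex_Ioi 0)
    (f' := fun u => (s * cosh (s * u) * sinh u - sinh (s * u) * cosh u) / sinh u ^ 2)
    (fun u hu => (hderiv u hu).continuousAt.continuousWithinAt) (fun u hu => ?_) (fun u hu => ?_)
  · rw [interior_Ioi] at hu ⊢
    exact (hderiv u hu).hasDerivWithinAt
  · rw [interior_Ioi] at hu
    exact div_nonpos_of_nonpos_of_nonneg
      (sub_nonpos.2 (mul_cosh_mul_mul_sinh_le hs0 hs1 (le_of_lt hu))) (sq_nonneg _)

/-- `t ↦ cosh (s * arcosh t)` is concave on `[1, ∞)`; this is its tangent line at `t = cosh C`. -/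
theorem cosh_mul_le_tangent {s C : ℝ} (hs0 : 0 ≤ s) (hs1 : s ≤ 1) (hC : 0 < C) (u : ℝ) :
    cosh (s * u) ≤ cosh (s * C) + s * sinh (s * C) / sinh C * (cosh u - cosh C) := by
  wlog hu : 0 ≤ u generalizing u
  · rw [← cosh_abs (s * u), abs_mul, abs_of_nonneg hs0, ← cosh_abs u]
    exact this |u| (abs_nonneg u)
  set b := s * sinh (s * C) / sinh C
  set r : ℝ → ℝ := fun x => sinh (s * x) / sinh x
  let G : ℝ → ℝ := fun x => cosh (s * C) + b * (cosh x - cosh C) - cosh (s * x)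
  have hG : ∀ x, HasDerivAt G (b * sinh x - s * sinh (s * x)) x := fun x => by
    have hsx := (hasDerivAt_id x).const_mul s
    simp only [id, mul_one] at hsx
    exact ((((hasDerivAt_cosh x).sub_const (cosh C)).const_mul b).const_add (cosh (s * C))).sub
      hsx.cosh |>.congr_deriv (by ring)
  have hG' : ∀ x, 0 < x → b * sinh x - s * sinh (s * x) = s * sinh x * (r C - r x) := fun x hx => by
    have := (sinh_pos_iff.2 hx).ne'
    have := (sinh_pos_iff.2 hC).ne'
    simp only [b, r]
    field_simp
  have hGC : G C = 0 := by simp [G]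
  suffices 0 ≤ G u by simp only [G] at this; linarith
  rcases le_total u C with huC | hCu
  · have hanti : AntitoneOn G (Icc 0 C) :=
      antitoneOn_of_hasDerivWithinAt_nonpos (convex_Icc 0 C)
        (fun x _ => (hG x).continuousAt.continuousWithinAt) (fun x _ => (hG x).hasDerivWithinAt)
        (fun x hx => by
          rw [interior_Icc] at hx
          rw [hG' x hx.1]
          have : r C ≤ r x := antitoneOn_sinh_mul_div_sinh hs0 hs1 hx.1 hC hx.2.le
          have : 0 ≤ sinh x := sinh_nonneg_iff.2 hx.1.le
          exact mul_nonpos_of_nonneg_of_nonpos (by positivity) (by linarith))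
    exact hGC ▸ hanti ⟨hu, huC⟩ ⟨hC.le, le_rfl⟩ huC
  · have hmono : MonotoneOn G (Ici C) :=
      monotoneOn_of_hasDerivWithinAt_nonneg (convex_Ici C)
        (fun x _ => (hG x).continuousAt.continuousWithinAt) (fun x _ => (hG x).hasDerivWithinAt)
        (fun x hx => by
          rw [interior_Ici] at hx
          have hx0 : 0 < x := hC.trans hx
          rw [hG' x hx0]
          have : r x ≤ r C := antitoneOn_sinh_mul_div_sinh hs0 hs1 hC hx0 hx.le
          have : 0 ≤ sinh x := sinh_nonneg_iff.2 hx0.le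
          exact mul_nonneg (by positivity) (by linarith))
    exact hGC ▸ hmono self_mem_Ici hCu hCu

theorem exp_le_add_two_mul_cosh_sub_one (y : ℝ) : exp y ≤ y + (2 * cosh y - 1) := by
  have := add_one_le_exp (-y)
  rw [cosh_eq]
  linarith

theorem two_mul_cosh_sub_one_le_exp_sq (y : ℝ) : 2 * cosh y - 1 ≤ exp (y ^ 2) := by
  have hsq : exp (y ^ 2) = exp (y ^ 2 / 2) ^ 2 := by rw [← exp_nat_mul]; ring_nf
  nlinarith [cosh_le_exp_half_sq y, sq_nonneg (exp (y ^ 2 / 2) - 1)]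

end Real

theorem integrable_and_integral_le_of_lintegral_ofReal_le {Ω : Type*} [MeasurableSpace Ω]
    {μ : Measure Ω} {f : Ω → ℝ} {c : ℝ} (hf : AEStronglyMeasurable f μ) (hf0 : 0 ≤ᵐ[μ] f)
    (hc : 0 ≤ c) (h : ∫⁻ ω, ENNReal.ofReal (f ω) ∂μ ≤ ENNReal.ofReal c) :
    Integrable f μ ∧ ∫ ω, f ω ∂μ ≤ c := by
  have hfi : Integrable f μ :=
    (lintegral_ofReal_ne_top_iff_integrable hf hf0).1 (ne_top_of_le_ne_top ENNReal.ofReal_ne_top h)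
  refine ⟨hfi, (ENNReal.ofReal_le_ofReal_iff hc).1 ?_⟩
  rwa [ofReal_integral_eq_lintegral_ofReal hfi hf0]

section

variable {Ω : Type*} [MeasurableSpace Ω] {μ : Measure Ω} [IsProbabilityMeasure μ]

theorem integral_cosh_mul_le {X : Ω → ℝ} {C s : ℝ} (hC : 0 ≤ C) (hs : |s| ≤ 1)
    (hX : Integrable (fun ω => cosh (X ω)) μ) (hXC : ∫ ω, cosh (X ω) ∂μ ≤ cosh C) :
    ∫ ω, cosh (s * X ω) ∂μ ≤ cosh (s * C) := by
  have hcosh_abs : ∀ x, cosh (s * x) = cosh (|s| * x) := fun x => by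
    rw [← cosh_abs, abs_mul, ← cosh_abs (|s| * x), abs_mul, abs_abs]
  simp only [hcosh_abs]
  have hpos : 0 ≤ᵐ[μ] fun ω => cosh (|s| * X ω) := ae_of_all _ fun _ => (cosh_pos _).le
  rcases hC.eq_or_lt with rfl | hC
  · calc ∫ ω, cosh (|s| * X ω) ∂μ ≤ ∫ ω, cosh (X ω) ∂μ :=
          integral_mono_of_nonneg hpos hX <| ae_of_all _ fun ω => cosh_le_cosh.2 <| by
            rw [abs_mul, abs_abs]; exact mul_le_of_le_one_left (abs_nonneg _) hs
      _ ≤ cosh (|s| * 0) := by simpa using hXC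
  · set b := |s| * sinh (|s| * C) / sinh C
    have hb : 0 ≤ b := div_nonneg
      (mul_nonneg (abs_nonneg s) (sinh_nonneg_iff.2 (by positivity))) (sinh_pos_iff.2 hC).le
    have hX' : Integrable (fun ω => b * (cosh (X ω) - cosh C)) μ :=
      (hX.sub (integrable_const _)).const_mul b
    calc ∫ ω, cosh (|s| * X ω) ∂μ ≤ ∫ ω, cosh (|s| * C) + b * (cosh (X ω) - cosh C) ∂μ :=
          integral_mono_of_nonneg hpos ((integrable_const _).add hX')
            (ae_of_all _ fun ω => cosh_mul_le_tangent (abs_nonneg s) hs hC (X ω))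
      _ = cosh (|s| * C) + b * (∫ ω, cosh (X ω) ∂μ - cosh C) := by
          rw [integral_add (integrable_const _) hX', integral_const_mul,
            integral_sub hX (integrable_const _)]
          simp
      _ ≤ cosh (|s| * C) := by nlinarith

theorem mgf_le_exp_sq_mul_sq {X : Ω → ℝ} {C l : ℝ} (hC : 0 ≤ C) (hl : |l| ≤ 1)
    (hX : Integrable X μ) (hX0 : μ[X] = 0)
    (hcosh : Integrable (fun ω => cosh (X ω)) μ) (hXC : ∫ ω, cosh (X ω) ∂μ ≤ cosh C) :
    mgf X μ l ≤ exp (C ^ 2 * l ^ 2) := by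
  have hcosh_l : Integrable (fun ω => cosh (l * X ω)) μ :=
    hcosh.mono' (continuous_cosh.comp_aestronglyMeasurable (hX.aestronglyMeasurable.const_mul l))
      <| ae_of_all _ fun ω => by
        rw [norm_of_nonneg (cosh_pos _).le, cosh_le_cosh, abs_mul]
        exact mul_le_of_le_one_left (abs_nonneg _) hl
  have hlX : Integrable (fun ω => l * X ω) μ := hX.const_mul l
  have hcosh_l' : Integrable (fun ω => 2 * cosh (l * X ω) - 1) μ :=
    (hcosh_l.const_mul 2).sub (integrable_const 1)
  calc mgf X μ l ≤ ∫ ω, l * X ω + (2 * cosh (l * X ω) - 1) ∂μ :=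
        integral_mono_of_nonneg (ae_of_all _ fun _ => (exp_pos _).le)
          (hlX.add hcosh_l')
          (ae_of_all _ fun ω => exp_le_add_two_mul_cosh_sub_one _)
    _ = 2 * ∫ ω, cosh (l * X ω) ∂μ - 1 := by
        rw [integral_add hlX hcosh_l',
          integral_sub (hcosh_l.const_mul 2) (integrable_const 1), integral_const_mul,
          integral_const_mul, hX0]
        simp
    _ ≤ 2 * cosh (l * C) - 1 := by linarith [integral_cosh_mul_le hC hl hcosh hXC]
    _ ≤ exp (C ^ 2 * l ^ 2) := by
        rw [show C ^ 2 * l ^ 2 = (l * C) ^ 2 by ring]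
        exact two_mul_cosh_sub_one_le_exp_sq _

end

/-- There is an absolute constant `A ∈ (0,∞)` such that for every centered real random
variable `X` with `E[exp|X|] ≤ cosh C` (for some `C ≥ 0`), one has
`E[exp(λX)] ≤ exp(A C² λ²)` for all `λ ∈ [−1,1]`. -/
theorem stmt4 :
    ∃ A : ℝ, 0 < A ∧
      ∀ (Ω : Type) (_ : MeasurableSpace Ω) (μ : Measure Ω), IsProbabilityMeasure μ →
        ∀ (X : Ω → ℝ), Measurable X → Integrable X μ → (∫ ω, X ω ∂μ) = 0 →
          ∀ C : ℝ, 0 ≤ C →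
            (∫⁻ ω, ENNReal.ofReal (Real.exp |X ω|) ∂μ) ≤ ENNReal.ofReal (Real.cosh C) →
            ∀ l ∈ Set.Icc (-1 : ℝ) 1,
              (∫⁻ ω, ENNReal.ofReal (Real.exp (l * X ω)) ∂μ) ≤
                ENNReal.ofReal (Real.exp (A * C ^ 2 * l ^ 2)) := by
  refine ⟨1, one_pos, fun Ω _ μ _ X hXm hX hX0 C hC hexp l hl => ?_⟩
  have hl : |l| ≤ 1 := abs_le.2 hl
  have hcosh_le : ∀ x, cosh x ≤ exp |x| := fun x => by
    rw [← cosh_abs, cosh_eq]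
    linarith [exp_le_exp.2 (neg_le_self (abs_nonneg x))]
  have hexp_le : ∀ x, exp (l * x) ≤ exp |x| := fun x => exp_le_exp.2 <|
    (le_abs_self _).trans <| by rw [abs_mul]; exact mul_le_of_le_one_left (abs_nonneg _) hl
  have lintegral_le_of_le_exp_abs {f : ℝ → ℝ} (hf : ∀ x, f x ≤ exp |x|) :
      ∫⁻ ω, ENNReal.ofReal (f (X ω)) ∂μ ≤ ENNReal.ofReal (cosh C) :=
    (lintegral_mono fun ω => ENNReal.ofReal_le_ofReal (hf (X ω))).trans hexp
  obtain ⟨hcosh, hXC⟩ := integrable_and_integral_le_of_lintegral_ofReal_le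
    (by fun_prop : Measurable fun ω => cosh (X ω)).aestronglyMeasurable
    (ae_of_all _ fun _ => (cosh_pos _).le) (cosh_pos C).le (lintegral_le_of_le_exp_abs hcosh_le)
  obtain ⟨hexp_l, -⟩ := integrable_and_integral_le_of_lintegral_ofReal_le
    (by fun_prop : Measurable fun ω => exp (l * X ω)).aestronglyMeasurable
    (ae_of_all _ fun _ => (exp_pos _).le) (cosh_pos C).le (lintegral_le_of_le_exp_abs hexp_le)
  have hmgf := mgf_le_exp_sq_mul_sq hC hl hX hX0 hcosh hXC
  rw [mgf, ← one_mul (C ^ 2)] at hmgf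
  rw [← ofReal_integral_eq_lintegral_ofReal hexp_l (ae_of_all _ fun _ => (exp_pos _).le)]
  exact ENNReal.ofReal_le_ofReal hmgf
end

section
/- For every real random variable X, the following are equivalent: (a) there exists C < ∞ such that ln E[exp(λX)] ≤ C λ² for all λ ∈ [−1,1]; (b) E[exp|X|] < ∞ and E[X] = 0. -/
/-!
(b) ⇒ (a): comparing the exponential series term by term gives
`exp (t x) ≤ 1 + t x + t² exp |x|` for `|t| ≤ 1`, so when `E[X] = 0` the moment generating
function is at most `1 + t² E[exp |X|] ≤ exp (E[exp |X|] t²)`.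

(a) ⇒ (b): the bounds at `t = ±1` make `exp |X|` integrable. Near `0` we then have
`1 + t E[X] ≤ E[exp (t X)] ≤ exp (C t²)`, with equality at `t = 0`, so the derivatives at `0`
agree and `E[X] = 0`.
-/

open MeasureTheory Real Filter Topology ProbabilityTheory

namespace Real

lemma exp_sub_one_sub_eq_tsum (y : ℝ) :
    exp y - 1 - y = ∑' n : ℕ, y ^ (n + 2) / (n + 2).factorial := by
  rw [exp_eq_exp_ℝ, NormedSpace.exp_eq_tsum_div]
  beta_reduce
  rw [← (summable_pow_div_factorial y).sum_add_tsum_nat_add 2]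
  simp only [Finset.sum_range_succ, Finset.range_one, Finset.sum_singleton, pow_zero, pow_one,
    Nat.factorial_zero, Nat.factorial_one, Nat.cast_one, div_one]
  ring

lemma exp_mul_sub_one_sub_le {t : ℝ} (x : ℝ) (ht : |t| ≤ 1) :
    exp (t * x) - 1 - t * x ≤ t ^ 2 * (exp |x| - 1 - |x|) := by
  rw [exp_sub_one_sub_eq_tsum, exp_sub_one_sub_eq_tsum, ← tsum_mul_left]
  refine Summable.tsum_le_tsum (fun n => ?_)
    ((summable_nat_add_iff 2).2 (summable_pow_div_factorial _))
    (((summable_nat_add_iff 2).2 (summable_pow_div_factorial _)).mul_left _)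
  calc (t * x) ^ (n + 2) / (n + 2).factorial
      ≤ |t| ^ (n + 2) * (|x| ^ (n + 2) / (n + 2).factorial) := by
        rw [mul_div_assoc', ← mul_pow, ← abs_mul, ← abs_pow]
        exact div_le_div_of_nonneg_right (le_abs_self _) (by positivity)
    _ ≤ |t| ^ 2 * (|x| ^ (n + 2) / (n + 2).factorial) :=
        mul_le_mul_of_nonneg_right (pow_le_pow_of_le_one (abs_nonneg t) ht (by omega))
          (by positivity)
    _ = t ^ 2 * (|x| ^ (n + 2) / (n + 2).factorial) := by rw [sq_abs]

lemma exp_mul_le_one_add_mul_add_sq_mul_exp_abs {t : ℝ} (x : ℝ) (ht : |t| ≤ 1) :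
    exp (t * x) ≤ 1 + t * x + t ^ 2 * exp |x| := by
  nlinarith [exp_mul_sub_one_sub_le x ht, abs_nonneg x, sq_nonneg t]

lemma eq_zero_of_forall_one_add_mul_le_exp_mul_sq {a C : ℝ}
    (h : ∀ᶠ t in 𝓝 0, 1 + t * a ≤ exp (C * t ^ 2)) : a = 0 := by
  have hmin : IsLocalMin (fun t => exp (C * t ^ 2) - t * a) 0 :=
    h.mono fun t ht => by simpa using le_sub_iff_add_le.2 ht
  have hderiv : HasDerivAt (fun t => exp (C * t ^ 2) - t * a) (-a) 0 :=
    ((((hasDerivAt_pow 2 (0 : ℝ)).const_mul C).exp).sub (hasDerivAt_mul_const a)).congr_deriv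
      (by simp)
  exact neg_eq_zero.1 (hmin.hasDerivAt_eq_zero hderiv)

end Real

namespace ProbabilityTheory

variable {Ω : Type*} [MeasurableSpace Ω] {μ : Measure Ω} {X : Ω → ℝ} {t : ℝ}

lemma lintegral_ofReal_exp_mul_le_iff {c : ℝ} (hX : AEMeasurable X μ) (hc : 0 ≤ c) :
    ∫⁻ ω, ENNReal.ofReal (exp (t * X ω)) ∂μ ≤ ENNReal.ofReal c ↔
      Integrable (fun ω => exp (t * X ω)) μ ∧ mgf X μ t ≤ c := by
  have hpos : 0 ≤ᵐ[μ] fun ω => exp (t * X ω) := ae_of_all _ fun ω => (exp_pos _).le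
  by_cases hint : Integrable (fun ω => exp (t * X ω)) μ
  · rw [mgf, ← ofReal_integral_eq_lintegral_ofReal hint hpos, ENNReal.ofReal_le_ofReal_iff hc]
    exact ⟨fun h => ⟨hint, h⟩, And.right⟩
  · have htop : ∫⁻ ω, ENNReal.ofReal (exp (t * X ω)) ∂μ = ⊤ :=
      not_not.1 ((lintegral_ofReal_ne_top_iff_integrable (by fun_prop) hpos).not.2 hint)
    simp [htop, hint]

lemma integrable_exp_mul_of_integrable_exp_abs (hX : AEMeasurable X μ)
    (h : Integrable (fun ω => exp |X ω|) μ) (ht : |t| ≤ 1) :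
    Integrable (fun ω => exp (t * X ω)) μ := by
  refine h.mono' (by fun_prop) (ae_of_all _ fun ω => ?_)
  rw [norm_of_nonneg (exp_pos _).le, exp_le_exp]
  calc t * X ω ≤ |t| * |X ω| := by rw [← abs_mul]; exact le_abs_self _
    _ ≤ |X ω| := mul_le_of_le_one_left (abs_nonneg _) ht

lemma one_add_mul_integral_le_mgf [IsProbabilityMeasure μ] (hX : Integrable X μ)
    (ht : Integrable (fun ω => exp (t * X ω)) μ) : 1 + t * μ[X] ≤ mgf X μ t := by
  calc 1 + t * μ[X] = μ[fun ω => 1 + t * X ω] := by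
        rw [integral_add (integrable_const 1) (hX.const_mul t), integral_const_mul]
        simp
    _ ≤ mgf X μ t :=
        integral_mono ((integrable_const 1).add (hX.const_mul t)) ht
          fun ω => by linarith [add_one_le_exp (t * X ω)]

lemma mgf_le_one_add_mul_add_sq_mul [IsProbabilityMeasure μ] (hXm : AEMeasurable X μ)
    (hX : Integrable X μ) (h : Integrable (fun ω => exp |X ω|) μ) (ht : |t| ≤ 1) :
    mgf X μ t ≤ 1 + t * μ[X] + t ^ 2 * μ[fun ω => exp |X ω|] := by
  have hint : Integrable (fun ω => 1 + t * X ω) μ := (integrable_const 1).add (hX.const_mul t)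
  calc mgf X μ t ≤ μ[fun ω => 1 + t * X ω + t ^ 2 * exp |X ω|] := by
        rw [mgf]
        exact integral_mono (integrable_exp_mul_of_integrable_exp_abs hXm h ht)
          (hint.add (h.const_mul _)) fun ω => exp_mul_le_one_add_mul_add_sq_mul_exp_abs (X ω) ht
    _ = 1 + t * μ[X] + t ^ 2 * μ[fun ω => exp |X ω|] := by
        rw [integral_add hint (h.const_mul _), integral_add (integrable_const 1) (hX.const_mul t),
          integral_const_mul, integral_const_mul]
        simp

end ProbabilityTheory

/-- For a real random variable `X`, the following are equivalent:
(a) there is `C < ∞` with `ln E[exp(λX)] ≤ Cλ²` for all `λ ∈ [−1,1]`;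
(b) `E[exp|X|] < ∞` and `E[X] = 0`. -/
theorem stmt6 {Ω : Type*} [MeasurableSpace Ω] (μ : Measure Ω) [IsProbabilityMeasure μ]
    (X : Ω → ℝ) (hX : Measurable X) :
    (∃ C : ℝ, ∀ l ∈ Set.Icc (-1 : ℝ) 1,
        (∫⁻ ω, ENNReal.ofReal (Real.exp (l * X ω)) ∂μ) ≤ ENNReal.ofReal (Real.exp (C * l ^ 2)))
      ↔ ((∫⁻ ω, ENNReal.ofReal (Real.exp |X ω|) ∂μ) < ⊤ ∧
          Integrable X μ ∧ (∫ ω, X ω ∂μ) = 0) := by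
  simp_rw [lintegral_ofReal_exp_mul_le_iff hX.aemeasurable (exp_pos _).le, lt_top_iff_ne_top,
    lintegral_ofReal_ne_top_iff_integrable (f := fun ω => exp |X ω|) (μ := μ) (by fun_prop)
      (ae_of_all _ fun _ => (exp_pos _).le)]
  constructor
  · rintro ⟨C, hC⟩
    have hIcc : Set.Icc (-1 : ℝ) 1 ∈ 𝓝 0 := Icc_mem_nhds (by norm_num) (by norm_num)
    have hint : Integrable X μ := integrable_of_mem_interior_integrableExpSet
      (interior_mono (fun l hl => (hC l hl).1) (mem_interior_iff_mem_nhds.2 hIcc))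
    refine ⟨?_, hint, ?_⟩
    · simpa using integrable_exp_abs_mul_abs (t := 1) (hC 1 (by norm_num)).1
        (hC (-1) (by norm_num)).1
    · exact eq_zero_of_forall_one_add_mul_le_exp_mul_sq (C := C) <| eventually_of_mem hIcc
        fun l hl => (one_add_mul_integral_le_mgf hint (hC l hl).1).trans (hC l hl).2
  · rintro ⟨hexp, hint, hmean⟩
    refine ⟨μ[fun ω => exp |X ω|], fun l hl => ?_⟩
    have hl' : |l| ≤ 1 := abs_le.2 hl
    refine ⟨integrable_exp_mul_of_integrable_exp_abs hX.aemeasurable hexp hl', ?_⟩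
    calc mgf X μ l ≤ 1 + l * μ[X] + l ^ 2 * μ[fun ω => exp |X ω|] :=
          mgf_le_one_add_mul_add_sq_mul hX.aemeasurable hint hexp hl'
      _ = μ[fun ω => exp |X ω|] * l ^ 2 + 1 := by rw [hmean]; ring
      _ ≤ exp (μ[fun ω => exp |X ω|] * l ^ 2) := add_one_le_exp _
end

section
/- Let f : (0,∞) → [0,∞], C₀,…,C_n ≥ 0, and define recursively f₊[C₀,…,C_{k+1}] = (f₊[C₀,…,C_k])₊[C_{k+1}], where g₊[C](λ) = inf_{p ∈ [1/(1−λ),∞)} ((2/p) g(pλ) + (p/(p−1)) C λ²) for λ ∈ (0,1) and = ∞ for λ ≥ 1. Then for every λ with 0 < λ < 1/(n+1): (1/2^{n+1}) f₊[C₀,…,C_n](λ) ≤ (1 − (n+1)λ) f(λ/(1 − (n+1)λ)) + (λ/2) Σ_{k=0}^{n} 2^{−k} C_k. -/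
open MeasureTheory Real

/-- The upper duplication operation `f₊[C]`:
`f₊[C](λ) = inf_{p ≥ 1/(1−λ)} ((2/p) f(pλ) + (p/(p−1)) C λ²)` for `λ < 1`, and `∞` otherwise. -/
noncomputable def fplus (f : ℝ → ENNReal) (C : ℝ) (l : ℝ) : ENNReal :=
  if l < 1 then
    ⨅ p ∈ Set.Ici (1 / (1 - l)),
      ENNReal.ofReal (2 / p) * f (p * l) + ENNReal.ofReal (p / (p - 1) * C * l ^ 2)
  else ⊤

/-- The iterated operation `f₊[C₀,…,C_n]`, defined by
`f₊[C₀,…,C_{k+1}] = (f₊[C₀,…,C_k])₊[C_{k+1}]`. -/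
noncomputable def fplusIter (f : ℝ → ENNReal) (C : ℕ → ℝ) : ℕ → (ℝ → ENNReal)
  | 0 => fplus f (C 0)
  | n + 1 => fplus (fplusIter f C n) (C (n + 1))

/-! The choice `p = 1/(1-λ)` in the infimum defining `f₊[C]` gives
`f₊[C](λ) ≤ 2(1-λ) f(λ/(1-λ)) + Cλ`. Iterating it, the substitutions `λ ↦ λ/(1-λ)` compose to
`λ ↦ λ/(1-(n+1)λ)`, the factors `2(1-λ)` telescope to `2^{n+1}(1-(n+1)λ)`, and the additive terms
sum to `2^n λ Σ_k 2^{-k} C_k`. -/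

lemma fplus_le (f : ℝ → ENNReal) (c : ℝ) {l : ℝ} (hl : l < 1) :
    fplus f c l ≤ ENNReal.ofReal (2 * (1 - l)) * f (l / (1 - l)) + ENNReal.ofReal (c * l) := by
  have h1l : 1 - l ≠ 0 := by linarith
  have hp : 1 / (1 - l) / (1 / (1 - l) - 1) * c * l ^ 2 = c * l := by
    rw [div_sub_one h1l, sub_sub_cancel, div_div_div_cancel_right₀ h1l]
    rcases eq_or_ne l 0 with rfl | hl0
    · simp
    · field_simp
  rw [fplus, if_pos hl]
  refine (iInf₂_le (1 / (1 - l)) Set.self_mem_Ici).trans_eq ?_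
  rw [hp, one_div_mul_eq_div, div_div_eq_mul_div, div_one]

lemma one_sub_mul_div_one_sub {l : ℝ} (m : ℝ) (hl : 1 - l ≠ 0) :
    1 - m * (l / (1 - l)) = (1 - (m + 1) * l) / (1 - l) := by
  field_simp
  ring

lemma div_one_sub_mul_div_one_sub {l : ℝ} (m : ℝ) (hl : 1 - l ≠ 0) :
    l / (1 - l) / (1 - m * (l / (1 - l))) = l / (1 - (m + 1) * l) := by
  rw [one_sub_mul_div_one_sub m hl, div_div_div_cancel_right₀ hl]

lemma ofReal_mul_affine {u : ℝ} (hu : 0 ≤ u) (a b : ℝ) (x : ENNReal) :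
    ENNReal.ofReal u * (ENNReal.ofReal a * x + ENNReal.ofReal b) =
      ENNReal.ofReal (u * a) * x + ENNReal.ofReal (u * b) := by
  rw [mul_add, ← mul_assoc, ← ENNReal.ofReal_mul hu, ← ENNReal.ofReal_mul hu]

lemma fplusIter_le (f : ℝ → ENNReal) (C : ℕ → ℝ) (hC : ∀ k, 0 ≤ C k) (n : ℕ) {l : ℝ}
    (hl0 : 0 ≤ l) (hl : (n + 1) * l < 1) :
    fplusIter f C n l ≤
      ENNReal.ofReal (2 ^ (n + 1) * (1 - (n + 1) * l)) * f (l / (1 - (n + 1) * l)) +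
        ENNReal.ofReal (2 ^ n * l * ∑ k ∈ Finset.range (n + 1), C k / 2 ^ k) := by
  induction n generalizing l with
  | zero =>
    simp only [CharP.cast_eq_zero, zero_add, one_mul] at hl
    simpa [fplusIter, mul_comm l] using fplus_le f (C 0) hl
  | succ n ih =>
    push_cast at hl ⊢
    have hl1 : 0 < 1 - l := by nlinarith
    set l' := l / (1 - l)
    have hl'0 : 0 ≤ l' := div_nonneg hl0 hl1.le
    have hl' : (n + 1) * l' < 1 := by
      rw [← sub_pos, one_sub_mul_div_one_sub _ hl1.ne']
      exact div_pos (by linarith) hl1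
    have hS : 0 ≤ ∑ k ∈ Finset.range (n + 1), C k / 2 ^ k :=
      Finset.sum_nonneg fun k _ => div_nonneg (hC k) (by positivity)
    calc fplusIter f C (n + 1) l
        ≤ ENNReal.ofReal (2 * (1 - l)) * fplusIter f C n l' + ENNReal.ofReal (C (n + 1) * l) :=
          fplus_le _ _ (by linarith)
      _ ≤ ENNReal.ofReal (2 * (1 - l)) *
            (ENNReal.ofReal (2 ^ (n + 1) * (1 - (n + 1) * l')) * f (l' / (1 - (n + 1) * l')) +
              ENNReal.ofReal (2 ^ n * l' * ∑ k ∈ Finset.range (n + 1), C k / 2 ^ k)) +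
            ENNReal.ofReal (C (n + 1) * l) := by
          gcongr
          exact ih hl'0 hl'
      _ = _ := by
          rw [ofReal_mul_affine (by positivity), add_assoc, ← ENNReal.ofReal_add (by positivity)
            (mul_nonneg (hC _) hl0), div_one_sub_mul_div_one_sub _ hl1.ne',
            one_sub_mul_div_one_sub _ hl1.ne', Finset.sum_range_succ _ (n + 1)]
          congr 3
          · field_simp
            ring
          · simp only [l']
            field_simp
            ring

/-- For `0 < λ < 1/(n+1)`:
`(1/2^{n+1}) f₊[C₀,…,C_n](λ) ≤ (1 − (n+1)λ) f(λ/(1 − (n+1)λ)) + (λ/2) Σ_{k=0}^n 2^{−k} C_k`. -/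
theorem stmt10 (f : ℝ → ENNReal) (C : ℕ → ℝ) (hC : ∀ k, 0 ≤ C k) (n : ℕ)
    (l : ℝ) (hl0 : 0 < l) (hl1 : l < 1 / (n + 1)) :
    fplusIter f C n l / 2 ^ (n + 1) ≤
      ENNReal.ofReal (1 - (n + 1) * l) * f (l / (1 - (n + 1) * l)) +
        ENNReal.ofReal (l / 2 * ∑ k ∈ Finset.range (n + 1), C k / 2 ^ k) := by
  have hl : (n + 1) * l < 1 := by rwa [lt_div_iff₀' (by positivity)] at hl1
  have h2 : (2 : ENNReal) ^ (n + 1) = ENNReal.ofReal (2 ^ (n + 1)) := by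
    rw [ENNReal.ofReal_pow zero_le_two, ENNReal.ofReal_ofNat]
  rw [ENNReal.div_le_iff (by positivity) (by simp), mul_comm, h2,
    ofReal_mul_affine (by positivity)]
  convert fplusIter_le f C hC n hl0.le hl using 3
  ring
end

section
/- Let f : (0,∞) → [0,∞], C₀,…,C_n ≥ 0, define f₊[C](λ) = inf_{p ∈ [1/(1−λ),∞)} ((2/p) f(pλ) + (p/(p−1))Cλ²) for λ ∈ (0,1), ∞ otherwise, iterated as f₊[C₀,…,C_n]. Then for every ε ∈ (0,1) and every λ with 0 < λ ≤ ε · (min_{k≤n} 2^{−k/2}√C_k) / (Σ_{k≤n} 2^{−k/2}√C_k), one has (1/2^{n+1}) f₊[C₀,…,C_n](λ) ≤ (1−ε) f(λ/(1−ε)) + (λ²/(2ε)) (Σ_{k=0}^{n} 2^{−k/2}√C_k)². -/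
open MeasureTheory Real

/-!
Bounding the infimum defining `f₊[C](λ)` by its value at `p = 1/(1-δ)`, for any `δ ∈ [λ, 1)`,
gives `f₊[C](λ)/2 ≤ (1-δ) f(λ/(1-δ)) + Cλ²/(2δ)`. With `w_k = √(C_k/2^k)` and `S = Σ_{k≤n} w_k`,
the step adding `C_{n+1}` takes `δ = ε w_{n+1}/(S + w_{n+1})` and applies the induction hypothesis
at `λ/(1-δ)` and `ε' = (ε-δ)/(1-δ)`, for which `(1-δ)(1-ε') = 1-ε`. Splitting `ε` into `δ + (ε-δ)`
in proportion to `w_{n+1} : S` is the equality case of `a²/x + b²/y ≥ (a+b)²/(x+y)`, so the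
quadratic terms add up to exactly `λ²(S + w_{n+1})²/(2ε)`.
-/

open Finset

lemma fplus_le_of_le {f : ℝ → ENNReal} {C l δ : ℝ} (hδ0 : 0 < δ) (hδ1 : δ < 1) (hl : l ≤ δ) :
    fplus f C l ≤
      ENNReal.ofReal (2 * (1 - δ)) * f (l / (1 - δ)) + ENNReal.ofReal (C * l ^ 2 / δ) := by
  have h1δ : 0 < 1 - δ := by linarith
  rw [fplus, if_pos (by linarith)]
  have hp : 1 / (1 - δ) ∈ Set.Ici (1 / (1 - l)) :=
    one_div_le_one_div_of_le h1δ (by linarith)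
  have hcoef : 1 / (1 - δ) / (1 / (1 - δ) - 1) * C * l ^ 2 = C * l ^ 2 / δ := by
    field_simp [hδ0.ne']
    ring
  refine (iInf₂_le _ hp).trans_eq ?_
  rw [hcoef, one_div, div_inv_eq_mul, inv_mul_eq_div]

lemma fplus_div_two_pow_le {g : ℝ → ENNReal} (N : ℕ) {w l δ : ℝ} (hδ0 : 0 < δ) (hδ1 : δ < 1)
    (hl : l ≤ δ) :
    fplus g (2 ^ N * w ^ 2) l / 2 ^ (N + 1) ≤
      ENNReal.ofReal (1 - δ) * (g (l / (1 - δ)) / 2 ^ N) +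
        ENNReal.ofReal (l ^ 2 / (2 * δ) * w ^ 2) := by
  refine (ENNReal.div_le_div_right (fplus_le_of_le hδ0 hδ1 hl) _).trans_eq ?_
  rw [ENNReal.add_div, ENNReal.ofReal_mul zero_le_two, pow_succ', ENNReal.ofReal_ofNat, mul_assoc,
    ENNReal.mul_div_mul_left _ _ two_ne_zero ENNReal.ofNat_ne_top, mul_div_assoc]
  congr 1
  rw [← ENNReal.ofReal_ofNat 2, ← ENNReal.ofReal_pow zero_le_two,
    ← ENNReal.ofReal_mul (by positivity), ← ENNReal.ofReal_div_of_pos (by positivity)]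
  congr 1
  field_simp

lemma sq_div_add_sq_div_of_proportional {a b ε : ℝ} (ha : 0 < a) (hb : 0 < b) (hε : 0 < ε) :
    a ^ 2 / (ε * a / (a + b)) + b ^ 2 / (ε * b / (a + b)) = (a + b) ^ 2 / ε := by
  field_simp

lemma mul_sq_div_add_sq_div_of_split {S a ε δ l : ℝ} (hS : 0 < S) (ha : 0 < a) (hε : 0 < ε)
    (hδ1 : δ < 1) (hδ : δ = ε * a / (S + a)) :
    (1 - δ) * ((l / (1 - δ)) ^ 2 / (2 * ((ε - δ) / (1 - δ))) * S ^ 2) +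
        l ^ 2 / (2 * δ) * a ^ 2 =
      l ^ 2 / (2 * ε) * (S + a) ^ 2 := by
  have hεδ : ε - δ = ε * S / (S + a) := by
    rw [hδ]
    field_simp
    ring
  have hsplit : S ^ 2 / (ε - δ) + a ^ 2 / δ = (S + a) ^ 2 / ε := by
    rw [hεδ, hδ]
    exact sq_div_add_sq_div_of_proportional hS ha hε
  have hfirst : (1 - δ) * ((l / (1 - δ)) ^ 2 / (2 * ((ε - δ) / (1 - δ))) * S ^ 2) =
      l ^ 2 / 2 * (S ^ 2 / (ε - δ)) := by
    have : 1 - δ ≠ 0 := by linarith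
    field_simp
  linear_combination l ^ 2 / 2 * hsplit + hfirst

lemma fplus_div_two_pow_le_of_forall {ι : Type*} {f g : ℝ → ENNReal} (N : ℕ) (w : ι → ℝ)
    (p : ι → Prop) {S a ε l : ℝ} (hS : 0 < S) (ha : 0 < a) (hε0 : 0 < ε) (hε1 : ε < 1)
    (hg : ∀ ε' l', 0 < ε' → ε' < 1 → (∀ k, p k → l' * S ≤ ε' * w k) →
      g l' / 2 ^ N ≤
        ENNReal.ofReal (1 - ε') * f (l' / (1 - ε')) +
          ENNReal.ofReal (l' ^ 2 / (2 * ε') * S ^ 2))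
    (hl : ∀ k, p k → l * (S + a) ≤ ε * w k) (hla : l * (S + a) ≤ ε * a) :
    fplus g (2 ^ N * a ^ 2) l / 2 ^ (N + 1) ≤
      ENNReal.ofReal (1 - ε) * f (l / (1 - ε)) +
        ENNReal.ofReal (l ^ 2 / (2 * ε) * (S + a) ^ 2) := by
  have hSa : 0 < S + a := by linarith
  set δ := ε * a / (S + a)
  have hεδ : ε - δ = ε * S / (S + a) := by
    simp only [δ]
    field_simp
    ring
  have hδ0 : 0 < δ := by positivity
  have hδε : 0 < ε - δ := by rw [hεδ]; positivity
  have h1δ : 0 < 1 - δ := by linarith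
  have hlδ : l ≤ δ := (le_div_iff₀ hSa).2 (by linarith)
  set ε' := (ε - δ) / (1 - δ)
  have hε'0 : 0 < ε' := by positivity
  have hε'1 : ε' < 1 := (div_lt_one h1δ).2 (by linarith)
  have hl' : ∀ k, p k → l / (1 - δ) * S ≤ ε' * w k := by
    intro k hk
    rw [div_mul_eq_mul_div, div_mul_eq_mul_div, div_le_div_iff_of_pos_right h1δ, hεδ,
      div_mul_eq_mul_div, le_div_iff₀ hSa]
    nlinarith [hl k hk]
  have h1ε : (1 - δ) * (1 - ε') = 1 - ε := by
    simp only [ε']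
    field_simp
    ring
  have hquad := mul_sq_div_add_sq_div_of_split (l := l) hS ha hε0 (by linarith) rfl
  calc _ ≤ ENNReal.ofReal (1 - δ) * (g (l / (1 - δ)) / 2 ^ N) +
          ENNReal.ofReal (l ^ 2 / (2 * δ) * a ^ 2) :=
        fplus_div_two_pow_le N hδ0 (by linarith) hlδ
    _ ≤ ENNReal.ofReal (1 - δ) * (ENNReal.ofReal (1 - ε') * f (l / (1 - δ) / (1 - ε')) +
          ENNReal.ofReal ((l / (1 - δ)) ^ 2 / (2 * ε') * S ^ 2)) +
          ENNReal.ofReal (l ^ 2 / (2 * δ) * a ^ 2) := by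
        gcongr
        exact hg ε' _ hε'0 hε'1 hl'
    _ = _ := by
        rw [mul_add, ← mul_assoc, ← ENNReal.ofReal_mul h1δ.le, h1ε, div_div, h1ε, add_assoc,
          ← ENNReal.ofReal_mul h1δ.le, ← ENNReal.ofReal_add (by positivity) (by positivity),
          hquad]

lemma fplusIter_div_two_pow_le (f : ℝ → ENNReal) (w : ℕ → ℝ) (n : ℕ) (hw : ∀ k ≤ n, 0 < w k)
    {ε l : ℝ} (hε0 : 0 < ε) (hε1 : ε < 1)
    (hl : ∀ k ≤ n, l * ∑ i ∈ range (n + 1), w i ≤ ε * w k) :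
    fplusIter f (fun k => 2 ^ k * w k ^ 2) n l / 2 ^ (n + 1) ≤
      ENNReal.ofReal (1 - ε) * f (l / (1 - ε)) +
        ENNReal.ofReal (l ^ 2 / (2 * ε) * (∑ i ∈ range (n + 1), w i) ^ 2) := by
  induction n generalizing ε l with
  | zero =>
    have hlε : l ≤ ε := le_of_mul_le_mul_right (by simpa using hl 0 le_rfl) (hw 0 le_rfl)
    have h := fplus_div_two_pow_le (g := f) (w := w 0) 0 hε0 hε1 hlε
    rw [pow_zero (2 : ENNReal), div_one] at h
    simpa only [fplusIter, zero_add, sum_range_one] using h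
  | succ n ih =>
    simp only [sum_range_succ _ (n + 1)] at hl ⊢
    have hS : 0 < ∑ i ∈ range (n + 1), w i :=
      sum_pos (fun i hi => hw i (by grind)) nonempty_range_add_one
    exact fplus_div_two_pow_le_of_forall (n + 1) w (· ≤ n) hS (hw _ le_rfl) hε0 hε1
      (fun _ _ => ih (fun k hk => hw k (by omega))) (fun k hk => hl k (by omega)) (hl _ le_rfl)

/-- For every `ε ∈ (0,1)` and every `λ` with
`0 < λ ≤ ε·(min_{k≤n} 2^{−k/2}√C_k)/(Σ_{k≤n} 2^{−k/2}√C_k)` (note `2^{−k/2}√C_k = √(C_k/2^k)`):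
`(1/2^{n+1}) f₊[C₀,…,C_n](λ) ≤ (1−ε) f(λ/(1−ε)) + (λ²/(2ε)) (Σ_{k=0}^n 2^{−k/2}√C_k)²`. -/
theorem stmt12 (f : ℝ → ENNReal) (C : ℕ → ℝ) (hC : ∀ k, 0 ≤ C k) (n : ℕ)
    (ε : ℝ) (hε0 : 0 < ε) (hε1 : ε < 1) (l : ℝ) (hl0 : 0 < l)
    (hl : l ≤ ε * ((Finset.range (n + 1)).inf' (by simp) fun k => Real.sqrt (C k / 2 ^ k)) /
        (∑ k ∈ Finset.range (n + 1), Real.sqrt (C k / 2 ^ k))) :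
    fplusIter f C n l / 2 ^ (n + 1) ≤
      ENNReal.ofReal (1 - ε) * f (l / (1 - ε)) +
        ENNReal.ofReal (l ^ 2 / (2 * ε) *
          (∑ k ∈ Finset.range (n + 1), Real.sqrt (C k / 2 ^ k)) ^ 2) := by
  set w : ℕ → ℝ := fun k => √(C k / 2 ^ k)
  have hmin : 0 ≤ (range (n + 1)).inf' nonempty_range_add_one w :=
    le_inf' _ _ fun k _ => sqrt_nonneg _
  have hS : 0 < ∑ k ∈ range (n + 1), w k := by
    by_contra! hS
    exact hl0.not_ge (hl.trans (div_nonpos_of_nonneg_of_nonpos (mul_nonneg hε0.le hmin) hS))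
  have hlw : ∀ k ≤ n, l * ∑ i ∈ range (n + 1), w i ≤ ε * w k := fun k hk =>
    ((le_div_iff₀ hS).1 hl).trans <|
      mul_le_mul_of_nonneg_left (inf'_le _ (mem_range.2 (by omega))) hε0.le
  have hw : ∀ k ≤ n, 0 < w k := fun k hk =>
    pos_of_mul_pos_right ((mul_pos hl0 hS).trans_le (hlw k hk)) hε0.le
  have hCw : C = fun k => 2 ^ k * w k ^ 2 := funext fun k => by
    rw [sq_sqrt (div_nonneg (hC k) (by positivity)), mul_div_cancel₀ _ (by positivity)]
  rw [hCw]
  exact fplusIter_div_two_pow_le f w n hw hε0 hε1 hlw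
end

section
/- Suppose Y is a C-duplication of X, meaning there exist random variables X₁, X₂, Z on some probability space with X₁, X₂ independent, X₁, X₂ each distributed like X, X₁+X₂+Z distributed like Y, and ln E[exp(λZ)] ≤ Cλ² for all λ ∈ [−1,1]. If E[exp(ε|X|)] < ∞ for some ε > 0, then E[exp(δ|Y|)] < ∞ for some δ > 0 (in fact δ = ε/(1+ε) works), and E[Y] = 2 E[X]. -/
/-!
The two-sided bound at `λ = ±1` makes `exp |Z|` integrable, and independence bounds
`E[exp(ε|X₁ + X₂|)]` by `E[exp(ε|X|)]²`. Convexity of `exp` with weights `1/(1+ε)` and `ε/(1+ε)`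
then gives, with `δ = ε/(1+ε)`,
`exp(δ|X₁ + X₂ + Z|) ≤ exp(ε|X₁ + X₂|)/(1+ε) + ε exp(|Z|)/(1+ε)`.
For the mean, `E[exp(λZ)] ≤ exp(Cλ²)` with equality at `λ = 0`, so `0` is a local maximum of
`λ ↦ E[exp(λZ)] - exp(Cλ²)` and `E[Z]`, the derivative there, vanishes.
-/

open MeasureTheory ProbabilityTheory Real

/-- `Y` (on `(Ω₂, ν)`) is a `C`-duplication of `X` (on `(Ω₁, μ)`): there exist random
variables `X₁, X₂, Z` on some probability space such that `X₁, X₂` are independent,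
`X₁, X₂` are each distributed like `X`, `X₁ + X₂ + Z` is distributed like `Y`, and
`ln E[exp(λZ)] ≤ Cλ²` for all `λ ∈ [−1,1]`. -/
def IsCDuplication {Ω₁ Ω₂ : Type*} [MeasurableSpace Ω₁] [MeasurableSpace Ω₂]
    (μ : Measure Ω₁) (ν : Measure Ω₂) (X : Ω₁ → ℝ) (Y : Ω₂ → ℝ) (C : ℝ) : Prop :=
  ∃ (Ω : Type) (_ : MeasurableSpace Ω) (P : Measure Ω) (X₁ X₂ Z : Ω → ℝ),
    IsProbabilityMeasure P ∧
    Measurable X₁ ∧ Measurable X₂ ∧ Measurable Z ∧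
    IndepFun X₁ X₂ P ∧
    P.map X₁ = μ.map X ∧ P.map X₂ = μ.map X ∧
    P.map (fun ω => X₁ ω + X₂ ω + Z ω) = ν.map Y ∧
    ∀ l ∈ Set.Icc (-1 : ℝ) 1,
      (∫⁻ ω, ENNReal.ofReal (Real.exp (l * Z ω)) ∂P) ≤ ENNReal.ofReal (Real.exp (C * l ^ 2))

open Filter Set Topology

lemma abs_le_inv_mul_exp_mul_abs {c : ℝ} (hc : 0 < c) (x : ℝ) : |x| ≤ c⁻¹ * exp (c * |x|) := by
  rw [le_inv_mul_iff₀ hc]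
  linarith [add_one_le_exp (c * |x|)]

lemma exp_mul_abs_add_le {a b : ℝ} (ha : 0 < a) (hb : 0 < b) (x y : ℝ) :
    exp (a * b / (a + b) * |x + y|)
      ≤ b / (a + b) * exp (a * |x|) + a / (a + b) * exp (b * |y|) := by
  have hab : 0 < a + b := add_pos ha hb
  calc exp (a * b / (a + b) * |x + y|)
      ≤ exp (b / (a + b) * (a * |x|) + a / (a + b) * (b * |y|)) := by
        gcongr
        calc a * b / (a + b) * |x + y| ≤ a * b / (a + b) * (|x| + |y|) := by
              gcongr; exact abs_add_le x y
          _ = _ := by ring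
    _ ≤ b / (a + b) * exp (a * |x|) + a / (a + b) * exp (b * |y|) :=
        convexOn_exp.2 (mem_univ _) (mem_univ _) (by positivity) (by positivity)
          (by field_simp; ring)

section

variable {Ω : Type*} [MeasurableSpace Ω] {P : Measure Ω}

lemma lintegral_ofReal_exp_lt_top_iff_integrable {g : Ω → ℝ} (hg : AEMeasurable g P) :
    ∫⁻ ω, ENNReal.ofReal (exp (g ω)) ∂P < ⊤ ↔ Integrable (fun ω => exp (g ω)) P := by
  rw [lt_top_iff_ne_top]
  exact lintegral_ofReal_ne_top_iff_integrable (by fun_prop)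
    (ae_of_all _ fun ω => (exp_pos (g ω)).le)

lemma integrable_of_integrable_exp_mul_abs {W : Ω → ℝ} {c : ℝ} (hc : 0 < c) (hW : AEMeasurable W P)
    (h : Integrable (fun ω => exp (c * |W ω|)) P) : Integrable W P :=
  (h.const_mul c⁻¹).mono' hW.aestronglyMeasurable
    (ae_of_all _ fun ω => abs_le_inv_mul_exp_mul_abs hc (W ω))

lemma integrable_exp_mul_abs_add_of_exp_moments {U V : Ω → ℝ} {a b : ℝ} (ha : 0 < a) (hb : 0 < b)
    (hU : AEMeasurable U P) (hV : AEMeasurable V P)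
    (hUi : Integrable (fun ω => exp (a * |U ω|)) P)
    (hVi : Integrable (fun ω => exp (b * |V ω|)) P) :
    Integrable (fun ω => exp (a * b / (a + b) * |U ω + V ω|)) P := by
  refine ((hUi.const_mul (b / (a + b))).add (hVi.const_mul (a / (a + b)))).mono' (by fun_prop)
    (ae_of_all _ fun ω => ?_)
  rw [norm_of_nonneg (exp_pos _).le]
  exact exp_mul_abs_add_le ha hb (U ω) (V ω)

lemma ProbabilityTheory.IndepFun.integrable_exp_mul_abs_add {U V : Ω → ℝ} {c : ℝ} (hc : 0 ≤ c)
    (hind : IndepFun U V P) (hU : AEMeasurable U P) (hV : AEMeasurable V P)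
    (hUi : Integrable (fun ω => exp (c * |U ω|)) P)
    (hVi : Integrable (fun ω => exp (c * |V ω|)) P) :
    Integrable (fun ω => exp (c * |U ω + V ω|)) P := by
  have hexp : Measurable fun x : ℝ => exp (c * |x|) := by fun_prop
  refine ((hind.comp hexp hexp).integrable_mul hUi hVi).mono' (by fun_prop)
    (ae_of_all _ fun ω => ?_)
  rw [norm_of_nonneg (exp_pos _).le, Pi.mul_apply, Function.comp_apply, Function.comp_apply,
    ← exp_add, ← mul_add]
  gcongr
  exact abs_add_le _ _

lemma mgf_le_of_lintegral_le {Z : Ω → ℝ} {t b : ℝ} (hb : 0 ≤ b)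
    (hint : Integrable (fun ω => exp (t * Z ω)) P)
    (h : ∫⁻ ω, ENNReal.ofReal (exp (t * Z ω)) ∂P ≤ ENNReal.ofReal b) : mgf Z P t ≤ b := by
  rw [← ENNReal.ofReal_le_ofReal_iff hb, mgf,
    ofReal_integral_eq_lintegral_ofReal hint (ae_of_all _ fun ω => (exp_pos _).le)]
  exact h

lemma integral_eq_zero_of_mgf_le_exp_mul_sq [IsProbabilityMeasure P] {Z : Ω → ℝ} {C : ℝ}
    (h0 : 0 ∈ interior (integrableExpSet Z P))
    (h : ∀ᶠ t in 𝓝 0, mgf Z P t ≤ exp (C * t ^ 2)) : P[Z] = 0 := by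
  have hmax : IsLocalMax (mgf Z P - fun t => exp (C * t ^ 2)) 0 := by
    filter_upwards [h] with t ht
    simpa [mgf_zero] using ht
  have hderiv : HasDerivAt (mgf Z P - fun t => exp (C * t ^ 2)) (P[Z] - 0) 0 := by
    have hmgf := hasDerivAt_mgf h0
    simp only [zero_mul, exp_zero, mul_one] at hmgf
    simpa using hmgf.sub (((hasDerivAt_id (0 : ℝ)).pow 2).const_mul C).exp
  simpa using hmax.hasDerivAt_eq_zero hderiv

lemma Icc_subset_integrableExpSet_of_lintegral_le {Z : Ω → ℝ} {C : ℝ} (hZ : AEMeasurable Z P)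
    (hmgf : ∀ l ∈ Icc (-1 : ℝ) 1,
      ∫⁻ ω, ENNReal.ofReal (exp (l * Z ω)) ∂P ≤ ENNReal.ofReal (exp (C * l ^ 2))) :
    Icc (-1 : ℝ) 1 ⊆ integrableExpSet Z P := fun l hl =>
  (lintegral_ofReal_exp_lt_top_iff_integrable (by fun_prop)).1
    ((hmgf l hl).trans_lt ENNReal.ofReal_lt_top)

lemma integrable_exp_abs_of_lintegral_le {Z : Ω → ℝ} {C : ℝ} (hZ : AEMeasurable Z P)
    (hmgf : ∀ l ∈ Icc (-1 : ℝ) 1,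
      ∫⁻ ω, ENNReal.ofReal (exp (l * Z ω)) ∂P ≤ ENNReal.ofReal (exp (C * l ^ 2))) :
    Integrable (fun ω => exp (1 * |Z ω|)) P := by
  have hI := Icc_subset_integrableExpSet_of_lintegral_le hZ hmgf
  simpa using integrable_exp_abs_mul_abs (t := 1) (hI ⟨by norm_num, le_rfl⟩)
    (hI ⟨le_rfl, by norm_num⟩)

lemma integral_eq_zero_of_lintegral_le [IsProbabilityMeasure P] {Z : Ω → ℝ} {C : ℝ}
    (hZ : AEMeasurable Z P)
    (hmgf : ∀ l ∈ Icc (-1 : ℝ) 1,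
      ∫⁻ ω, ENNReal.ofReal (exp (l * Z ω)) ∂P ≤ ENNReal.ofReal (exp (C * l ^ 2))) :
    P[Z] = 0 := by
  have hI := Icc_subset_integrableExpSet_of_lintegral_le hZ hmgf
  have hnhds : Icc (-1 : ℝ) 1 ∈ 𝓝 0 := Icc_mem_nhds (by norm_num) (by norm_num)
  exact integral_eq_zero_of_mgf_le_exp_mul_sq
    (mem_interior_iff_mem_nhds.2 (mem_of_superset hnhds hI))
    (eventually_of_mem hnhds fun l hl =>
      mgf_le_of_lintegral_le (exp_pos _).le (hI hl) (hmgf l hl))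

end

theorem stmt13_general {Ω₁ Ω₂ : Type*} [MeasurableSpace Ω₁] [MeasurableSpace Ω₂]
    (μ : Measure Ω₁) (ν : Measure Ω₂)
    (X : Ω₁ → ℝ) (Y : Ω₂ → ℝ) (hX : Measurable X) (hY : Measurable Y)
    (C : ℝ) (hdup : IsCDuplication μ ν X Y C)
    (ε : ℝ) (hε : 0 < ε)
    (hmom : (∫⁻ ω, ENNReal.ofReal (Real.exp (ε * |X ω|)) ∂μ) < ⊤) :
    (∫⁻ ω, ENNReal.ofReal (Real.exp (ε / (1 + ε) * |Y ω|)) ∂ν) < ⊤ ∧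
      (∫ ω, Y ω ∂ν) = 2 * ∫ ω, X ω ∂μ := by
  obtain ⟨Ω, _, P, X₁, X₂, Z, _, hX₁, hX₂, hZ, hind, hlaw₁, hlaw₂, hlawS, hmgf⟩ := hdup
  have hd₁ : IdentDistrib X₁ X P μ := ⟨hX₁.aemeasurable, hX.aemeasurable, hlaw₁⟩
  have hd₂ : IdentDistrib X₂ X P μ := ⟨hX₂.aemeasurable, hX.aemeasurable, hlaw₂⟩
  have hdS : IdentDistrib (fun ω => X₁ ω + X₂ ω + Z ω) Y P ν :=
    ⟨by fun_prop, hY.aemeasurable, hlawS⟩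
  have hexp : ∀ c : ℝ, Measurable fun x : ℝ => exp (c * |x|) := fun c => by fun_prop
  have hXi := (lintegral_ofReal_exp_lt_top_iff_integrable (by fun_prop)).1 hmom
  have hZi := integrable_exp_abs_of_lintegral_le hZ.aemeasurable hmgf
  have hSi := integrable_exp_mul_abs_add_of_exp_moments hε one_pos (by fun_prop) hZ.aemeasurable
    (hind.integrable_exp_mul_abs_add hε.le hX₁.aemeasurable hX₂.aemeasurable
      ((hd₁.comp (hexp ε)).integrable_iff.2 hXi) ((hd₂.comp (hexp ε)).integrable_iff.2 hXi)) hZi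
  rw [mul_one, add_comm] at hSi
  refine ⟨(lintegral_ofReal_exp_lt_top_iff_integrable (by fun_prop)).2
    ((hdS.comp (hexp _)).integrable_iff.1 hSi), ?_⟩
  have hXint := integrable_of_integrable_exp_mul_abs hε hX.aemeasurable hXi
  have hX₁int := hd₁.integrable_iff.2 hXint
  have hX₂int := hd₂.integrable_iff.2 hXint
  have hZint := integrable_of_integrable_exp_mul_abs one_pos hZ.aemeasurable hZi
  rw [← hdS.integral_eq, integral_add (f := fun ω => X₁ ω + X₂ ω) (hX₁int.add hX₂int) hZint,
    integral_add hX₁int hX₂int, hd₁.integral_eq, hd₂.integral_eq,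
    integral_eq_zero_of_lintegral_le hZ.aemeasurable hmgf]
  ring

/-- If `Y` is a `C`-duplication of `X` and `E[exp(ε|X|)] < ∞` for some `ε > 0`, then
`E[exp(δ|Y|)] < ∞` for `δ = ε/(1+ε) > 0`, and `E[Y] = 2 E[X]`. -/
theorem stmt13 {Ω₁ Ω₂ : Type*} [MeasurableSpace Ω₁] [MeasurableSpace Ω₂]
    (μ : Measure Ω₁) (ν : Measure Ω₂) [IsProbabilityMeasure μ] [IsProbabilityMeasure ν]
    (X : Ω₁ → ℝ) (Y : Ω₂ → ℝ) (hX : Measurable X) (hY : Measurable Y)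
    (C : ℝ) (hC : 0 ≤ C) (hdup : IsCDuplication μ ν X Y C)
    (ε : ℝ) (hε : 0 < ε)
    (hmom : (∫⁻ ω, ENNReal.ofReal (Real.exp (ε * |X ω|)) ∂μ) < ⊤) :
    (∫⁻ ω, ENNReal.ofReal (Real.exp (ε / (1 + ε) * |Y ω|)) ∂ν) < ⊤ ∧
      (∫ ω, Y ω ∂ν) = 2 * ∫ ω, X ω ∂μ :=
  stmt13_general μ ν X Y hX hY C hdup ε hε hmom
end
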